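/- arXiv:1711.09225 — 3 statements merged into one kernel-verified Lean document; each statement's English description precedes it below -/
import Mathlib

section
/- Let U be a free Z_p-module of rank 2 with a non-degenerate symmetric bilinear form b: U × U → Z_p, and let L ⊂ U be a rank 1 submodule that is totally isotropic for b. If L is saturated in the dual lattice U^∨ = {x ∈ Q_p ⊗ U | b(x,U) ⊆ Z_p}, then U^∨ = U, i.e. the form b is unimodular on U. -/
/-!
Let `e` generate `L`. If `b(e, U) ⊆ pℤ_p`, then `e/p` lies in `U^∨` and `p • (e/p) = e ∈ L`, so
saturation puts `e/p` in `ℤ_p e`, which is absurd. Hence `b(e, g)` is a unit for some `g ∈ U`.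
As `b(e, e) = 0`, the vectors `e, g` form a basis of `V`, and for `x = s e + t g ∈ U^∨` the
integrality of `b(x, e) = t b(g, e)` and of `b(x, g) = s b(e, g) + t b(g, g)` forces
`s, t ∈ ℤ_p`, i.e. `x ∈ U`.
-/

section Bilinear

variable {K V : Type*} [AddCommGroup V]

theorem LinearMap.linearIndependent_pair_of_apply_self_eq_zero [Field K] [Module K V]
    (b : V →ₗ[K] V →ₗ[K] K) {e g : V} (hee : b e e = 0) (hge : b g e ≠ 0) : LinearIndependent K ![e, g] := by
  rw [LinearIndependent.pair_iff]
  intro s t hst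
  have ht : t * b g e = 0 := by simpa [hee] using congrArg (b · e) hst
  obtain rfl : t = 0 := (mul_eq_zero.mp ht).resolve_right hge
  have he : e ≠ 0 := by rintro rfl; simp at hge
  simp only [zero_smul, add_zero, smul_eq_zero, he, or_false] at hst
  exact ⟨hst, rfl⟩

theorem LinearMap.norm_coeffs_le_one_of_norm_apply_le_one [NormedField K] [IsUltrametricDist K]
    [Module K V] (b : V →ₗ[K] V →ₗ[K] K) {e g : V}
    (hee : b e e = 0) (heg : ‖b e g‖ = 1) (hge : ‖b g e‖ = 1) (hgg : ‖b g g‖ ≤ 1) {s t : K}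
    (hxe : ‖b (s • e + t • g) e‖ ≤ 1) (hxg : ‖b (s • e + t • g) g‖ ≤ 1) :
    ‖s‖ ≤ 1 ∧ ‖t‖ ≤ 1 := by
  simp only [map_add, map_smul, LinearMap.add_apply, LinearMap.smul_apply, smul_eq_mul,
    hee, mul_zero, zero_add] at hxe hxg
  have ht : ‖t‖ ≤ 1 := by simpa [hge] using hxe
  refine ⟨?_, ht⟩
  have hs : ‖s * b e g‖ ≤ 1 := by
    calc ‖s * b e g‖ = ‖(s * b e g + t * b g g) + -(t * b g g)‖ := by ring_nf
      _ ≤ max ‖s * b e g + t * b g g‖ ‖-(t * b g g)‖ := IsUltrametricDist.norm_add_le_max _ _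
      _ ≤ 1 := max_le hxg (by rw [norm_neg, norm_mul]; exact mul_le_one₀ ht (norm_nonneg _) hgg)
  simpa [heg] using hs

end Bilinear

section Padic

variable {p : ℕ} [Fact p.Prime]

theorem PadicInt.exists_eq_coe_iff_norm_le_one (q : ℚ_[p]) :
    (∃ c : ℤ_[p], q = c) ↔ ‖q‖ ≤ 1 :=
  ⟨fun ⟨c, hc⟩ => hc ▸ c.2, fun h => ⟨⟨q, h⟩, rfl⟩⟩

variable {V : Type*} [AddCommGroup V] [Module ℚ_[p] V] [Module ℤ_[p] V]
  [IsScalarTower ℤ_[p] ℚ_[p] V]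

theorem PadicInt.smul_eq_coe_smul (c : ℤ_[p]) (v : V) :
    c • v = (c : ℚ_[p]) • v :=
  (algebraMap_smul ℚ_[p] c v).symm

theorem Padic.norm_inv_p_mul_le_one {x : ℚ_[p]} (hx : ‖x‖ < 1) :
    ‖(p : ℚ_[p])⁻¹ * x‖ ≤ 1 := by
  have hp : (0 : ℝ) < p := by exact_mod_cast (Fact.out : p.Prime).pos
  have hx' : ‖x‖ ≤ (p : ℝ)⁻¹ := by
    simpa using (Padic.norm_lt_pow_iff_norm_le_pow_sub_one x 0).mp (by simpa using hx)
  rw [norm_mul, norm_inv, Padic.norm_p, inv_inv]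
  calc (p : ℝ) * ‖x‖ ≤ p * (p : ℝ)⁻¹ := by gcongr
    _ = 1 := mul_inv_cancel₀ hp.ne'

theorem Padic.inv_p_smul_notMem_span_singleton {e : V} (he : e ≠ 0) :
    (p : ℚ_[p])⁻¹ • e ∉ Submodule.span ℤ_[p] {e} := by
  rw [Submodule.mem_span_singleton]
  rintro ⟨c, hc⟩
  rw [PadicInt.smul_eq_coe_smul] at hc
  have hc' : (c : ℚ_[p]) = (p : ℚ_[p])⁻¹ := smul_left_injective ℚ_[p] he hc
  have hp : (1 : ℝ) < p := by exact_mod_cast (Fact.out : p.Prime).one_lt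
  have hc1 := c.norm_le_one
  rw [← PadicInt.padic_norm_e_of_padicInt, hc', norm_inv, Padic.norm_p, inv_inv] at hc1
  linarith

theorem exists_mem_norm_apply_eq_one_of_saturated
    (b : V →ₗ[ℚ_[p]] V →ₗ[ℚ_[p]] ℚ_[p]) (U : Submodule ℤ_[p] V) {e : V} (he : e ≠ 0)
    (heU : ∀ u ∈ U, ‖b e u‖ ≤ 1)
    (hsat : ∀ x : V, (∀ u ∈ U, ‖b x u‖ ≤ 1) →
      (p : ℤ_[p]) • x ∈ Submodule.span ℤ_[p] {e} → x ∈ Submodule.span ℤ_[p] {e}) :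
    ∃ g ∈ U, ‖b e g‖ = 1 := by
  by_contra! h
  have hp : (p : ℚ_[p]) ≠ 0 := by exact_mod_cast (Fact.out : p.Prime).ne_zero
  refine Padic.inv_p_smul_notMem_span_singleton he (hsat _ (fun u hu => ?_) ?_)
  · simpa using Padic.norm_inv_p_mul_le_one ((heU u hu).lt_of_ne (h u hu))
  · rw [PadicInt.smul_eq_coe_smul, smul_smul, PadicInt.coe_natCast, mul_inv_cancel₀ hp, one_smul]
    exact Submodule.mem_span_singleton_self e

end Padic

theorem stmt_0_general (p : ℕ) [Fact p.Prime]
    (V : Type*) [AddCommGroup V] [Module ℚ_[p] V]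
    [Module ℤ_[p] V] [IsScalarTower ℤ_[p] ℚ_[p] V]
    [FiniteDimensional ℚ_[p] V] (hdim : Module.finrank ℚ_[p] V = 2)
    (b : V →ₗ[ℚ_[p]] V →ₗ[ℚ_[p]] ℚ_[p]) (hsymm : ∀ x y, b x y = b y x)
    (U : Submodule ℤ_[p] V)
    (hUint : ∀ x ∈ U, ∀ y ∈ U, ∃ c : ℤ_[p], b x y = (c : ℚ_[p]))
    (L : Submodule ℤ_[p] V) (hLU : L ≤ U)
    (hLrank : ∃ e : V, e ≠ 0 ∧ L = Submodule.span ℤ_[p] {e})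
    (hLiso : ∀ x ∈ L, ∀ y ∈ L, b x y = 0)
    (hLsat : ∀ x : V, (∀ u ∈ U, ∃ c : ℤ_[p], b x u = (c : ℚ_[p])) →
      (p : ℤ_[p]) • x ∈ L → x ∈ L) :
    ∀ x : V, (∀ u ∈ U, ∃ c : ℤ_[p], b x u = (c : ℚ_[p])) → x ∈ U := by
  simp only [PadicInt.exists_eq_coe_iff_norm_le_one] at hUint hLsat ⊢
  obtain ⟨e, he, rfl⟩ := hLrank
  have heL : e ∈ Submodule.span ℤ_[p] {e} := Submodule.mem_span_singleton_self e
  have heU : e ∈ U := hLU heL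
  have hee : b e e = 0 := hLiso e heL e heL
  obtain ⟨g, hgU, heg⟩ := exists_mem_norm_apply_eq_one_of_saturated b U he (hUint e heU) hLsat
  have hge : ‖b g e‖ = 1 := hsymm g e ▸ heg
  have hspan : Submodule.span ℚ_[p] {e, g} = ⊤ := by
    have hind := b.linearIndependent_pair_of_apply_self_eq_zero hee
      (norm_ne_zero_iff.mp (hge.symm ▸ one_ne_zero))
    simpa [Set.pair_comm] using hind.span_eq_top_of_card_eq_finrank (by simp [hdim])
  intro x hx
  obtain ⟨s, t, rfl⟩ := Submodule.mem_span_pair.mp (hspan ▸ Submodule.mem_top (x := x))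
  obtain ⟨hs, ht⟩ := b.norm_coeffs_le_one_of_norm_apply_le_one hee heg hge (hUint g hgU g hgU)
    (hx e heU) (hx g hgU)
  obtain ⟨s, rfl⟩ := (PadicInt.exists_eq_coe_iff_norm_le_one s).mpr hs
  obtain ⟨t, rfl⟩ := (PadicInt.exists_eq_coe_iff_norm_le_one t).mpr ht
  rw [← PadicInt.smul_eq_coe_smul, ← PadicInt.smul_eq_coe_smul]
  exact U.add_mem (U.smul_mem _ heU) (U.smul_mem _ hgU)

/-- Lemma 2.5. Let `U` be a free `ℤ_[p]`-module of rank 2, realized as a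
lattice spanning a 2-dimensional `ℚ_[p]`-vector space `V`, with a non-degenerate symmetric
bilinear form `b` taking `ℤ_[p]`-values on `U`.  If `L ⊆ U` is a rank-1 totally isotropic
submodule which is saturated in the dual lattice
`U^∨ = {x ∈ V | b(x, U) ⊆ ℤ_[p]}`, then `U^∨ = U` (the inclusion `U ⊆ U^∨` being automatic). -/
theorem stmt_0 (p : ℕ) [Fact p.Prime]
    (V : Type*) [AddCommGroup V] [Module ℚ_[p] V]
    [Module ℤ_[p] V] [IsScalarTower ℤ_[p] ℚ_[p] V]
    [FiniteDimensional ℚ_[p] V] (hdim : Module.finrank ℚ_[p] V = 2)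
    (b : V →ₗ[ℚ_[p]] V →ₗ[ℚ_[p]] ℚ_[p]) (hsymm : ∀ x y, b x y = b y x)
    (hnd : ∀ x : V, (∀ y : V, b x y = 0) → x = 0)
    (U : Submodule ℤ_[p] V) (hUfg : U.FG)
    (hUspan : Submodule.span ℚ_[p] (U : Set V) = ⊤)
    (hUint : ∀ x ∈ U, ∀ y ∈ U, ∃ c : ℤ_[p], b x y = (c : ℚ_[p]))
    (L : Submodule ℤ_[p] V) (hLU : L ≤ U)
    (hLrank : ∃ e : V, e ≠ 0 ∧ L = Submodule.span ℤ_[p] {e})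
    (hLiso : ∀ x ∈ L, ∀ y ∈ L, b x y = 0)
    (hLsat : ∀ x : V, (∀ u ∈ U, ∃ c : ℤ_[p], b x u = (c : ℚ_[p])) →
      (p : ℤ_[p]) • x ∈ L → x ∈ L) :
    ∀ x : V, (∀ u ∈ U, ∃ c : ℤ_[p], b x u = (c : ℚ_[p])) → x ∈ U :=
  stmt_0_general p V hdim b hsymm U hUint L hLU hLrank hLiso hLsat
end

section
/- Let δ: G₀ → G₁ be an open continuous homomorphism of profinite groups with finite kernel. Let H be a closed subgroup of G₁ and ρ: H → G₀ a continuous homomorphism with δ ∘ ρ equal to the inclusion H ↪ G₁. Then there exists an open subgroup U of G₁ containing H and a continuous homomorphism ρ': U → G₀ such that ρ' restricts to ρ on H and δ ∘ ρ' is the inclusion U ↪ G₁. -/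
/-!
The image `ρ(H)` is a compact subgroup of `G₀` meeting the finite kernel of `δ` trivially.
A closed subgroup of a profinite group is the intersection of the open subgroups containing it,
so finitely many of them already exclude every nontrivial element of `ker δ`: their intersection
`P` is an open subgroup containing `ρ(H)` on which `δ` is injective. As `P` is compact, `δ` maps
it homeomorphically onto the open subgroup `U = δ(P) ⊇ H`, and `ρ'` is the inverse map.
-/

section Profinite

variable {G : Type*} [Group G] [TopologicalSpace G] [IsTopologicalGroup G]
  [CompactSpace G] [TotallyDisconnectedSpace G] {C : Subgroup G}

theorem exists_openSubgroup_le_notMem (hC : IsClosed (C : Set G)) {k : G} (hk : k ∉ C) :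
    ∃ N : OpenSubgroup G, C ≤ N ∧ k ∉ N := by
  have hsInf := ProfiniteGrp.closedSubgroup_eq_sInf_open ⟨C, hC⟩
  contrapose! hk
  change k ∈ (⟨C, hC⟩ : ClosedSubgroup G).toSubgroup
  rw [hsInf, Subgroup.mem_sInf]
  rintro N ⟨hNo, hCN⟩
  exact hk ⟨N, hNo⟩ hCN

theorem exists_openSubgroup_le_disjoint (hC : IsClosed (C : Set G)) {S : Set G}
    (hS : S.Finite) (hSC : Disjoint S C) :
    ∃ N : OpenSubgroup G, C ≤ N ∧ Disjoint S N := by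
  induction S, hS using Set.Finite.induction_on with
  | empty => exact ⟨⊤, le_top, Set.empty_disjoint _⟩
  | @insert k S _ _ ih =>
    rw [Set.disjoint_insert_left] at hSC
    obtain ⟨N₁, hCN₁, hkN₁⟩ := exists_openSubgroup_le_notMem hC hSC.1
    obtain ⟨N₂, hCN₂, hSN₂⟩ := ih hSC.2
    refine ⟨N₁ ⊓ N₂, le_inf hCN₁ hCN₂, Set.disjoint_insert_left.mpr ⟨?_, ?_⟩⟩
    · exact fun hk => hkN₁ hk.1
    · exact hSN₂.mono_right Set.inter_subset_right

end Profinite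

theorem MonoidHom.continuous_ofInjective_symm {G H : Type*} [Group G] [TopologicalSpace G]
    [CompactSpace G] [Group H] [TopologicalSpace H] [T2Space H] {f : G →* H}
    (hf : Continuous f) (hinj : Function.Injective f) :
    Continuous (MonoidHom.ofInjective hinj).symm :=
  (Continuous.homeoOfEquivCompactToT2 (f := (MonoidHom.ofInjective hinj).toEquiv)
    (hf.subtype_mk _)).symm.continuous

theorem MonoidHom.injective_domRestrict_of_disjoint {G N : Type*} [Group G] [Group N]
    (f : G →* N) {K : Subgroup G} (hK : Disjoint ((f.ker : Set G) \ {1}) K) :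
    Function.Injective (f.domRestrict K) := by
  refine (injective_iff_map_eq_one _).mpr fun k hk => Subtype.ext ?_
  by_contra hk1
  exact Set.disjoint_left.mp hK ⟨hk, hk1⟩ k.2

theorem stmt_2_general (G₀ G₁ : Type*)
    [Group G₀] [TopologicalSpace G₀] [IsTopologicalGroup G₀]
    [CompactSpace G₀] [T2Space G₀] [TotallyDisconnectedSpace G₀]
    [Group G₁] [TopologicalSpace G₁]
    [CompactSpace G₁] [T2Space G₁]
    (δ : G₀ →* G₁) (hδc : Continuous δ) (hδo : IsOpenMap δ)
    (hker : (δ.ker : Set G₀).Finite)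
    (H : Subgroup G₁) (hH : IsClosed (H : Set G₁))
    (ρ : H →* G₀) (hρc : Continuous ρ)
    (hρδ : ∀ h : H, δ (ρ h) = (h : G₁)) :
    ∃ (U : Subgroup G₁) (_ : IsOpen (U : Set G₁)) (hle : H ≤ U)
      (ρ' : U →* G₀), Continuous ρ' ∧ (∀ u : U, δ (ρ' u) = (u : G₁)) ∧
      ∀ (x : G₁) (hx : x ∈ H), ρ' ⟨x, hle hx⟩ = ρ ⟨x, hx⟩ := by
  have : CompactSpace H := isCompact_iff_compactSpace.mp hH.isCompact
  have hkerR : Disjoint ((δ.ker : Set G₀) \ {1}) ρ.range := by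
    rw [Set.disjoint_left]
    rintro _ ⟨hk, hk1⟩ ⟨h, rfl⟩
    have h1 : h = 1 := Subtype.ext ((hρδ h).symm.trans hk)
    exact hk1 (by rw [h1, map_one]; rfl)
  obtain ⟨P, hRP, hP⟩ := exists_openSubgroup_le_disjoint (isCompact_range hρc).isClosed
    hker.sdiff hkerR
  have hinj := δ.injective_domRestrict_of_disjoint hP
  have : CompactSpace P := isCompact_iff_compactSpace.mp P.isClosed.isCompact
  have hHU : H ≤ (δ.domRestrict (P : Subgroup G₀)).range := fun x hx =>
    ⟨⟨ρ ⟨x, hx⟩, hRP ⟨_, rfl⟩⟩, hρδ ⟨x, hx⟩⟩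
  refine ⟨_, ?_, hHU, P.subtype.comp (MonoidHom.ofInjective hinj).symm.toMonoidHom,
    continuous_subtype_val.comp
      ((δ.domRestrict (P : Subgroup G₀)).continuous_ofInjective_symm
        (hδc.comp continuous_subtype_val) hinj),
    MonoidHom.apply_ofInjective_symm hinj, fun x hx => ?_⟩
  · rw [MonoidHom.domRestrict_range (P : Subgroup G₀), Subgroup.coe_map]
    exact hδo _ P.isOpen
  · exact congrArg Subtype.val <| (MonoidHom.ofInjective hinj).symm_apply_eq
      (y := ⟨ρ ⟨x, hx⟩, hRP ⟨_, rfl⟩⟩) |>.mpr (Subtype.ext (hρδ ⟨x, hx⟩).symm)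

/-- Lemma 4.3. Let `δ : G₀ → G₁` be an open continuous homomorphism of
profinite groups with finite kernel, `H` a closed subgroup of `G₁`, and `ρ : H → G₀` a
continuous homomorphism with `δ ∘ ρ` the inclusion `H ↪ G₁`.  Then there is an open subgroup
`U ⊆ G₁` containing `H` and a continuous homomorphism `ρ' : U → G₀` restricting to `ρ` on `H`
with `δ ∘ ρ'` the inclusion `U ↪ G₁`. -/
theorem stmt_2 (G₀ G₁ : Type*)
    [Group G₀] [TopologicalSpace G₀] [IsTopologicalGroup G₀]
    [CompactSpace G₀] [T2Space G₀] [TotallyDisconnectedSpace G₀]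
    [Group G₁] [TopologicalSpace G₁] [IsTopologicalGroup G₁]
    [CompactSpace G₁] [T2Space G₁] [TotallyDisconnectedSpace G₁]
    (δ : G₀ →* G₁) (hδc : Continuous δ) (hδo : IsOpenMap δ)
    (hker : (δ.ker : Set G₀).Finite)
    (H : Subgroup G₁) (hH : IsClosed (H : Set G₁))
    (ρ : H →* G₀) (hρc : Continuous ρ)
    (hρδ : ∀ h : H, δ (ρ h) = (h : G₁)) :
    ∃ (U : Subgroup G₁) (_ : IsOpen (U : Set G₁)) (hle : H ≤ U)
      (ρ' : U →* G₀), Continuous ρ' ∧ (∀ u : U, δ (ρ' u) = (u : G₁)) ∧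
      ∀ (x : G₁) (hx : x ∈ H), ρ' ⟨x, hle hx⟩ = ρ ⟨x, hx⟩ :=
  stmt_2_general G₀ G₁ δ hδc hδo hker H hH ρ hρc hρδ
end

section
/- Let M be a finitely generated free Z-module with an endomorphism F of M ⊗ Z_p such that M ⊗ Z_p = M⁰ ⊕ M¹ ⊕ M² with F·x = q^s·x-type behavior, namely F(M^s) = q^s·M^s for s = 0,1,2, where q = p^a with a ≥ 1, and each M^s is a free Z_p-module. Suppose also F is semisimple on M ⊗ C with all eigenvalues of complex absolute value q (via a fixed embedding Z_p → C). Then M⁰ ⊗ C is the sum of eigenspaces of F for eigenvalues that are p-adic units, and complex conjugation on M ⊗ C maps M⁰ ⊗ C into M² ⊗ C. -/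
/-!
Write `q = p ^ a` and `Nˢ` for the `ℂ`-span of `j Mˢ`. The map `j` is `ι`-semilinear, intertwines
`Fp` with `FC`, and its image spans `ℂ ⊗ M`, whose dimension is the rank of `ℤ_[p] ⊗ M`. Hence `j`
sends a basis adapted to `M⁰ ⊕ M¹ ⊕ M²` to a basis, so `ℂ ⊗ M = N⁰ ⊕ N¹ ⊕ N²` is an
`FC`-stable decomposition along which every eigenspace splits.

On `Mˢ` we have `Fp = qˢ • g` with `g` invertible, so `FC` acts on `Nˢ` by the matrix `ι (qˢ G)`
with `det G` a unit. Reducing modulo `p`, `det (qˢ G - w)` is a unit when `s ≥ 1` and `w` is a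
unit, and `det (qˢ G - qˢ d) = q^(s n) det (G - d)` is nonzero when `p ∣ d`; neither eigenvalue
occurs on `Nˢ`. As `M⁰` has rank one, `N⁰` lies in the eigenspace of a unit `u`, which gives the
first claim. Since `|ι u| = q`, conjugation moves `N⁰` into the eigenspace of
`conj (ι u) = ι (q² u⁻¹) = ι (q⁰ · q² u⁻¹) = ι (q¹ · q u⁻¹)`, which meets neither `N⁰` nor `N¹`.
-/

open Module Submodule Matrix LinearMap
open scoped TensorProduct

namespace Module.End

variable {R V : Type*} [CommRing R] [AddCommGroup V] [Module R V]

theorem eigenspace_inf_sup_le {f : End R V} {A B : Submodule R V} (hA : A ≤ A.comap f)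
    (hB : B ≤ B.comap f) (hAB : Disjoint A B) (μ : R) :
    f.eigenspace μ ⊓ (A ⊔ B) ≤ f.eigenspace μ ⊓ A ⊔ f.eigenspace μ ⊓ B := by
  intro x hx
  obtain ⟨hx, hxAB⟩ := mem_inf.mp hx
  obtain ⟨a, ha, b, hb, rfl⟩ := mem_sup.mp hxAB
  have hsum : (f a - μ • a) + (f b - μ • b) = 0 := by
    rw [mem_eigenspace_iff, map_add, smul_add] at hx
    rw [sub_add_sub_comm, hx, sub_self]
  have haA : f a - μ • a ∈ A := sub_mem (hA ha) (smul_mem _ _ ha)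
  have hbB : f b - μ • b ∈ B := sub_mem (hB hb) (smul_mem _ _ hb)
  have ha' : f a - μ • a = 0 :=
    disjoint_def.mp hAB _ haA (by rw [eq_neg_of_add_eq_zero_left hsum]; exact neg_mem hbB)
  rw [ha', zero_add] at hsum
  exact mem_sup.mpr ⟨a, ⟨mem_eigenspace_iff.mpr (sub_eq_zero.mp ha'), ha⟩,
    b, ⟨mem_eigenspace_iff.mpr (sub_eq_zero.mp hsum), hb⟩, rfl⟩

theorem eigenspace_le_sup_inf₃ {f : End R V} {A B C : Submodule R V} (hA : A ≤ A.comap f)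
    (hB : B ≤ B.comap f) (hC : C ≤ C.comap f) (hA_BC : Disjoint A (B ⊔ C))
    (hBC : Disjoint B C) (htop : A ⊔ (B ⊔ C) = ⊤) (μ : R) :
    f.eigenspace μ ≤ f.eigenspace μ ⊓ A ⊔ (f.eigenspace μ ⊓ B ⊔ f.eigenspace μ ⊓ C) :=
  calc f.eigenspace μ = f.eigenspace μ ⊓ (A ⊔ (B ⊔ C)) := by rw [htop, inf_top_eq]
    _ ≤ f.eigenspace μ ⊓ A ⊔ f.eigenspace μ ⊓ (B ⊔ C) :=
      eigenspace_inf_sup_le hA (sup_le (hB.trans (comap_mono le_sup_left))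
        (hC.trans (comap_mono le_sup_right))) hA_BC μ
    _ ≤ _ := sup_le_sup_left (eigenspace_inf_sup_le hB hC hBC μ) _

theorem eigenspace_inf_span_eq_bot [NoZeroDivisors R] {κ : Type*} [Fintype κ] [DecidableEq κ]
    {f : End R V} {v : κ → V} (hv : LinearIndependent R v) (B : Matrix κ κ R)
    (hB : ∀ k, f (v k) = ∑ i, B i k • v i) {μ : R} (hdet : (B - μ • 1).det ≠ 0) :
    f.eigenspace μ ⊓ span R (Set.range v) = ⊥ := by
  rw [eq_bot_iff]
  intro x hx
  obtain ⟨hx, hxv⟩ := mem_inf.mp hx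
  obtain ⟨c, rfl⟩ := (mem_span_range_iff_exists_fun R).mp hxv
  suffices (B - μ • 1) *ᵥ c = 0 by simp [Matrix.eq_zero_of_mulVec_eq_zero hdet this]
  have hfx : f (∑ k, c k • v k) = ∑ i, (B *ᵥ c) i • v i := by
    simp only [map_sum, map_smul, hB, Finset.smul_sum, smul_smul, mulVec, dotProduct,
      Finset.sum_smul]
    rw [Finset.sum_comm]
    simp only [mul_comm]
  refine funext (Fintype.linearIndependent_iff.mp hv _ ?_)
  simp only [sub_mulVec, smul_mulVec, one_mulVec, Pi.sub_apply, Pi.smul_apply, sub_smul,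
    Finset.sum_sub_distrib, smul_eq_mul, ← smul_smul, ← Finset.smul_sum, ← hfx]
  exact sub_eq_zero.mpr (mem_eigenspace_iff.mp hx)

end Module.End

namespace Matrix

variable {R n : Type*} [CommRing R] [IsLocalRing R] [Fintype n] [DecidableEq n]

theorem isUnit_det_add_smul_of_mem_maximalIdeal {A : Matrix n n R} (hA : IsUnit A.det)
    (E : Matrix n n R) {c : R} (hc : c ∈ IsLocalRing.maximalIdeal R) :
    IsUnit (A + c • E).det := by
  rw [← isUnit_map_iff (IsLocalRing.residue R), RingHom.map_det]
  have hres : (IsLocalRing.residue R).mapMatrix (A + c • E) =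
      (IsLocalRing.residue R).mapMatrix A := by
    ext i k
    simp [(IsLocalRing.residue_eq_zero_iff c).mpr hc]
  rw [hres, ← RingHom.map_det]
  exact hA.map _

theorem isUnit_det_smul_sub_smul_one (A : Matrix n n R) {c w : R}
    (hc : c ∈ IsLocalRing.maximalIdeal R) (hw : IsUnit w) : IsUnit (c • A - w • 1).det := by
  rw [show c • A - w • 1 = (-w) • 1 + c • A by rw [neg_smul]; abel]
  refine isUnit_det_add_smul_of_mem_maximalIdeal ?_ A hc
  rw [det_smul, det_one, mul_one]
  exact hw.neg.pow _

theorem det_smul_sub_mul_smul_one_ne_zero [IsDomain R] {A : Matrix n n R} (hA : IsUnit A.det)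
    {c d : R} (hc : c ≠ 0) (hd : d ∈ IsLocalRing.maximalIdeal R) :
    (c • A - (c * d) • 1).det ≠ 0 := by
  rw [show c • A - (c * d) • 1 = c • (A + d • (-1)) by
    rw [smul_add, smul_smul, smul_neg, ← neg_smul, sub_eq_add_neg, neg_smul], det_smul]
  exact mul_ne_zero (pow_ne_zero _ hc) (isUnit_det_add_smul_of_mem_maximalIdeal hA _ hd).ne_zero

end Matrix

namespace Submodule

variable {R T : Type*} [CommRing R] [AddCommGroup T] [Module R T] {F : End R T}
  {P : Submodule R T}

theorem span_range_subtype_comp_basis {κ : Type*} (b : Basis κ R P) :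
    span R (Set.range (P.subtype ∘ b)) = P := by
  rw [Set.range_comp, ← map_span, b.span_eq, map_subtype_top]

theorem le_comap_of_map_eq_map_smul {c : R} (h : P.map F = P.map (c • LinearMap.id)) :
    P ≤ P.comap F :=
  map_le_iff_le_comap.mp <| h ▸ map_le_iff_le_comap.mpr fun _ hx => P.smul_mem c hx

theorem exists_isUnit_det_of_map_eq_map_smul [IsDomain R] [Module.Free R P] [Module.Finite R P]
    {c : R} (hc : c ≠ 0) (h : P.map F = P.map (c • LinearMap.id)) :
    ∃ g : End R P, IsUnit (LinearMap.det g) ∧ ∀ x : P, F x = c • (g x : T) := by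
  have hdiv (x : P) : ∃ y : P, F x = c • (y : T) := by
    obtain ⟨y, hy, hxy⟩ := h ▸ mem_map_of_mem (f := F) x.2
    exact ⟨⟨y, hy⟩, hxy.symm⟩
  choose Y hY using hdiv
  let b := Free.chooseBasis R P
  let g : End R P := b.constr R (Y ∘ b)
  have hFg : F ∘ₗ P.subtype = c • (P.subtype ∘ₗ g) := b.ext fun k => by simp [g, hY]
  have hFg' (x : P) : F x = c • (g x : T) := LinearMap.congr_fun hFg x
  have hsurj : Function.Surjective g := fun z => by
    obtain ⟨t, ht, htz⟩ := h.symm ▸ mem_map_of_mem (f := c • LinearMap.id) z.2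
    exact ⟨⟨t, ht⟩, smul_right_injective P hc (Subtype.ext (by simpa [← hFg'] using htz))⟩
  have hbij : Function.Bijective g :=
    ⟨OrzechProperty.injective_of_surjective_endomorphism g hsurj, hsurj⟩
  exact ⟨g, LinearMap.isUnit_det g ((End.isUnit_iff g).mpr hbij), hFg'⟩

theorem exists_le_eigenspace_of_finrank_eq_one [IsDomain R] [Module.Free R P]
    (hP : finrank R P = 1) {c : R} (hc : IsUnit c) (h : P.map F = P.map (c • LinearMap.id)) :
    ∃ u : Rˣ, P ≤ F.eigenspace u := by
  have : Module.Finite R P := Module.finite_of_finrank_eq_succ hP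
  obtain ⟨g, hg, hFg⟩ := exists_isUnit_det_of_map_eq_map_smul hc.ne_zero h
  obtain ⟨d, rfl⟩ := (g.existsUnique_eq_smul_id_of_finrank_eq_one hP).exists
  rw [LinearMap.det_smul, LinearMap.det_id, hP, pow_one, mul_one] at hg
  refine ⟨(hc.mul hg).unit, fun x hx => End.mem_eigenspace_iff.mpr ?_⟩
  simpa [mul_smul] using hFg ⟨x, hx⟩

end Submodule

namespace TensorProduct

variable {R A B M : Type*} [CommRing R] [CommRing A] [Algebra R A] [AddCommGroup M] [Module R M]

theorem span_one_tmul_eq_top : span A (Set.range fun m : M => (1 : A) ⊗ₜ[R] m) = ⊤ := by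
  refine eq_top_iff'.mpr fun x => ?_
  induction x using TensorProduct.induction_on with
  | zero => exact zero_mem _
  | tmul c m =>
    rw [← mul_one c, ← smul_eq_mul, ← smul_tmul']
    exact smul_mem _ _ (subset_span ⟨m, rfl⟩)
  | add x y hx hy => exact add_mem hx hy

theorem semilinearMap_ext_one_tmul [CommRing B] {σ : A →+* B} {N : Type*} [AddCommGroup N]
    [Module B N] {f g : A ⊗[R] M →ₛₗ[σ] N} (h : ∀ m, f (1 ⊗ₜ m) = g (1 ⊗ₜ m)) : f = g := by
  ext x
  induction x using TensorProduct.induction_on with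
  | zero => simp
  | tmul c m => rw [← mul_one c, ← smul_eq_mul, ← smul_tmul', map_smulₛₗ, map_smulₛₗ, h]
  | add x y hx hy => rw [map_add, map_add, hx, hy]

variable [CommRing B] [Algebra R B] {σ : A →+* B}

theorem map_smul_of_map_tmul (f : A ⊗[R] M →+ B ⊗[R] M) (hf : ∀ c m, f (c ⊗ₜ m) = σ c ⊗ₜ m)
    (c : A) (x : A ⊗[R] M) : f (c • x) = σ c • f x := by
  induction x using TensorProduct.induction_on with
  | zero => simp
  | tmul d m => rw [smul_tmul', hf, hf, smul_tmul', smul_eq_mul, smul_eq_mul, map_mul]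
  | add x y hx hy => rw [smul_add, map_add, hx, hy, map_add, smul_add]

def semilinearMapOfMapTmul (f : A ⊗[R] M →+ B ⊗[R] M) (hf : ∀ c m, f (c ⊗ₜ m) = σ c ⊗ₜ m) :
    A ⊗[R] M →ₛₗ[σ] B ⊗[R] M :=
  { f with map_smul' := map_smul_of_map_tmul f hf }

theorem span_range_eq_top_of_map_tmul {f : A ⊗[R] M → B ⊗[R] M}
    (hf : ∀ c m, f (c ⊗ₜ m) = σ c ⊗ₜ m) : span B (Set.range f) = ⊤ :=
  top_unique <| span_one_tmul_eq_top.ge.trans <| span_mono <| by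
    rintro _ ⟨m, rfl⟩
    exact ⟨1 ⊗ₜ m, by rw [hf, map_one]⟩

theorem map_comm_of_map_tmul {f : A ⊗[R] M →ₛₗ[σ] B ⊗[R] M}
    (hf : ∀ c m, f (c ⊗ₜ m) = σ c ⊗ₜ m) {φ : M →ₗ[R] M} {FA : End A (A ⊗[R] M)}
    {FB : End B (B ⊗[R] M)} (hFA : ∀ m, FA (1 ⊗ₜ m) = 1 ⊗ₜ φ m)
    (hFB : ∀ m, FB (1 ⊗ₜ m) = 1 ⊗ₜ φ m) (x : A ⊗[R] M) : f (FA x) = FB (f x) :=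
  LinearMap.congr_fun (semilinearMap_ext_one_tmul (f := f ∘ₛₗ FA) (g := FB ∘ₛₗ f) fun m => by
    simp only [LinearMap.comp_apply, hFA, hFB, hf, map_one]) x

end TensorProduct

theorem PadicInt.ringHom_injective {p : ℕ} [Fact p.Prime] {K : Type*} [Ring K] [CharZero K]
    (ι : ℤ_[p] →+* K) : Function.Injective ι := by
  refine (injective_iff_map_eq_zero ι).mpr fun z hz => by_contra fun h => ?_
  rw [PadicInt.unitCoeff_spec h, map_mul, map_pow, map_natCast] at hz
  have hp : ((p ^ z.valuation : ℕ) : K) ≠ 0 := Nat.cast_ne_zero.mpr (NeZero.ne _)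
  exact hp (by exact_mod_cast ((PadicInt.unitCoeff h).isUnit.map ι).mul_right_eq_zero.mp hz)

theorem Complex.conj_map_eq_of_mul_eq {R : Type*} [CommRing R] (ι : R →+* ℂ) (u : Rˣ) {w : R}
    (hw : ι (w * u) = (‖ι u‖ : ℂ) ^ 2) : starRingEnd ℂ (ι u) = ι w := by
  refine mul_right_cancel₀ (u.isUnit.map ι).ne_zero ?_
  rw [← map_mul, hw, mul_comm, Complex.mul_conj, Complex.normSq_eq_norm_sq]
  push_cast; rfl

namespace LinearMap

variable {R K T V : Type*} [CommRing R] [Field K] [AddCommGroup T] [Module R T]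
  [AddCommGroup V] [Module K V] {ι : R →+* K} (j : T →ₛₗ[ι] V)

theorem span_image_span (s : Set T) : span K (j '' span R s) = span K (j '' s) := by
  refine le_antisymm (span_le.mpr ?_) (span_mono (Set.image_mono subset_span))
  rintro _ ⟨y, hy, rfl⟩
  induction hy using span_induction with
  | mem z hz => exact subset_span ⟨z, hz, rfl⟩
  | zero => simp
  | add y z _ _ hy hz => rw [map_add]; exact add_mem hy hz
  | smul c y _ hy => rw [map_smulₛₗ]; exact smul_mem _ _ hy

theorem span_image_eq_span_range {κ : Type*} {P : Submodule R T} (b : Basis κ R P) :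
    span K (j '' P) = span K (Set.range (j ∘ P.subtype ∘ b)) := by
  conv_lhs => rw [← span_range_subtype_comp_basis b, span_image_span, ← Set.range_comp]

theorem span_image_sup (A B : Submodule R T) :
    span K (j '' (A ⊔ B : Submodule R T)) = span K (j '' A) ⊔ span K (j '' B) := by
  rw [← span_eq A, ← span_eq B, ← span_union, span_image_span, Set.image_union, span_union,
    span_image_span, span_image_span]

theorem linearIndependent_comp_of_span_eq_top [StrongRankCondition R] [Module.Finite R T]
    {κ : Type*} [Fintype κ] {u : κ → T} (hu : LinearIndependent R u)
    (hu_span : span R (Set.range u) = ⊤) (hj : span K (Set.range j) = ⊤)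
    (hrank : finrank K V = finrank R T) : LinearIndependent K (j ∘ u) := by
  have hspan : span K (Set.range (j ∘ u)) = ⊤ := by
    rw [Set.range_comp, ← span_image_span, hu_span, top_coe, Set.image_univ, hj]
  rw [linearIndependent_iff_card_le_finrank_span, Set.finrank, hspan, finrank_top, hrank]
  exact hu.fintype_card_le_finrank

theorem linearIndependent_and_disjoint_span_image₃ [Nontrivial R] [Module.Finite R T]
    (hj : span K (Set.range j) = ⊤) (hrank : finrank K V = finrank R T)
    {M₀ M₁ M₂ : Submodule R T} [Module.Free R M₀] [Module.Free R M₁] [Module.Free R M₂]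
    [Module.Finite R M₀] [Module.Finite R M₁] [Module.Finite R M₂]
    (htop : M₀ ⊔ (M₁ ⊔ M₂) = ⊤) (h₀ : Disjoint M₀ (M₁ ⊔ M₂)) (h₁₂ : Disjoint M₁ M₂) :
    LinearIndependent K (j ∘ M₀.subtype ∘ Free.chooseBasis R M₀) ∧
    LinearIndependent K (j ∘ M₁.subtype ∘ Free.chooseBasis R M₁) ∧
    LinearIndependent K (j ∘ M₂.subtype ∘ Free.chooseBasis R M₂) ∧
    Disjoint (span K (j '' M₀)) (span K (j '' M₁) ⊔ span K (j '' M₂)) ∧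
    Disjoint (span K (j '' M₁)) (span K (j '' M₂)) := by
  have hR := ((Free.chooseBasis R M₀).linearIndependent.map' _ M₀.ker_subtype).sum_type
    (((Free.chooseBasis R M₁).linearIndependent.map' _ M₁.ker_subtype).sum_type
      ((Free.chooseBasis R M₂).linearIndependent.map' _ M₂.ker_subtype)
      (by rwa [span_range_subtype_comp_basis, span_range_subtype_comp_basis]))
    (by rwa [Set.Sum.elim_range, span_union, span_range_subtype_comp_basis,
      span_range_subtype_comp_basis, span_range_subtype_comp_basis])
  have hK := linearIndependent_comp_of_span_eq_top j hR (by
    rwa [Set.Sum.elim_range, Set.Sum.elim_range, span_union, span_union,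
      span_range_subtype_comp_basis, span_range_subtype_comp_basis,
      span_range_subtype_comp_basis]) hj hrank
  rw [Sum.comp_elim, Sum.comp_elim] at hK
  obtain ⟨hv₀, hv₁₂, hd₀⟩ := linearIndependent_sum.mp hK
  obtain ⟨hv₁, hv₂, hd₁₂⟩ := linearIndependent_sum.mp hv₁₂
  simp only [Sum.elim_comp_inl, Sum.elim_comp_inr, Set.Sum.elim_range, span_union,
    ← span_image_eq_span_range] at hv₀ hv₁ hv₂ hd₀ hd₁₂
  exact ⟨hv₀, hv₁, hv₂, hd₀, hd₁₂⟩

variable {j} {F : End R T} {G : End K V}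

theorem map_mem_eigenspace (hjG : ∀ x, j (F x) = G (j x)) {u : R} {x : T}
    (hx : x ∈ F.eigenspace u) : j x ∈ G.eigenspace (ι u) := by
  rw [End.mem_eigenspace_iff] at hx ⊢
  rw [← hjG, hx, map_smulₛₗ]

theorem span_image_le_eigenspace (hjG : ∀ x, j (F x) = G (j x)) {P : Submodule R T} {u : R}
    (hP : P ≤ F.eigenspace u) : span K (j '' P) ≤ G.eigenspace (ι u) :=
  span_le.mpr <| by
    rintro _ ⟨x, hx, rfl⟩
    exact map_mem_eigenspace hjG (hP hx)

theorem hasEigenvalue_of_le_eigenspace (hjG : ∀ x, j (F x) = G (j x)) {P : Submodule R T}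
    [Module.Free R P] [Nontrivial P] {u : R} (hP : P ≤ F.eigenspace u)
    (hv : LinearIndependent K (j ∘ P.subtype ∘ Free.chooseBasis R P)) :
    G.HasEigenvalue (ι u) := by
  obtain ⟨k⟩ := (Free.chooseBasis R P).index_nonempty
  exact End.hasEigenvalue_of_hasEigenvector ⟨span_image_le_eigenspace hjG hP
    (subset_span ⟨_, (Free.chooseBasis R P k).2, rfl⟩), hv.ne_zero k⟩

theorem span_image_le_comap (hjG : ∀ x, j (F x) = G (j x)) {P : Submodule R T}
    (hP : P ≤ P.comap F) : span K (j '' P) ≤ (span K (j '' P)).comap G :=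
  span_le.mpr <| by
    rintro _ ⟨y, hy, rfl⟩
    rw [SetLike.mem_coe, mem_comap, ← hjG]
    exact subset_span ⟨F y, hP hy, rfl⟩

theorem eigenspace_inf_span_image_eq_bot (hjG : ∀ x, j (F x) = G (j x))
    (hι : Function.Injective ι) {κ : Type*} [Fintype κ] [DecidableEq κ] {P : Submodule R T}
    (b : Basis κ R P) (hv : LinearIndependent K (j ∘ P.subtype ∘ b)) {c : R} {g : End R P}
    (hg : ∀ x : P, F x = c • (g x : T)) {w : R}
    (hdet : (c • LinearMap.toMatrix b b g - w • 1).det ≠ 0) :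
    G.eigenspace (ι w) ⊓ span K (j '' P) = ⊥ := by
  rw [span_image_eq_span_range j b]
  refine End.eigenspace_inf_span_eq_bot hv ((c • LinearMap.toMatrix b b g).map ι)
    (fun k => ?_) ?_
  · show G (j (b k : T)) = ∑ i, ι (c * LinearMap.toMatrix b b g i k) • j (b i : T)
    rw [← hjG, hg, ← b.sum_repr (g (b k))]
    simp only [Submodule.coe_sum, Submodule.coe_smul, Finset.smul_sum, map_sum, map_smulₛₗ,
      smul_smul, LinearMap.toMatrix_apply]
  · have hmap : (c • LinearMap.toMatrix b b g - w • 1).map ι =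
        (c • LinearMap.toMatrix b b g).map ι - ι w • 1 := by
      simp [Matrix.map_sub, Matrix.map_smul' _ _ _ (map_mul ι)]
    rwa [← hmap, ← RingHom.mapMatrix_apply, ← RingHom.map_det, Ne, map_eq_zero_iff ι hι]

variable [IsDomain R] [IsLocalRing R]

theorem eigenspace_inf_span_image_eq_bot_of_isUnit (hjG : ∀ x, j (F x) = G (j x))
    (hι : Function.Injective ι) {P : Submodule R T} [Module.Free R P] [Module.Finite R P]
    {c : R} (hc : c ≠ 0) (hcm : c ∈ IsLocalRing.maximalIdeal R)
    (hP : P.map F = P.map (c • LinearMap.id))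
    (hv : LinearIndependent K (j ∘ P.subtype ∘ Free.chooseBasis R P)) {w : R} (hw : IsUnit w) :
    G.eigenspace (ι w) ⊓ span K (j '' P) = ⊥ := by
  obtain ⟨g, -, hFg⟩ := exists_isUnit_det_of_map_eq_map_smul hc hP
  exact eigenspace_inf_span_image_eq_bot hjG hι _ hv hFg
    (isUnit_det_smul_sub_smul_one _ hcm hw).ne_zero

theorem eigenspace_inf_span_image_eq_bot_of_mem_maximalIdeal (hjG : ∀ x, j (F x) = G (j x))
    (hι : Function.Injective ι) {P : Submodule R T} [Module.Free R P] [Module.Finite R P]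
    {c : R} (hc : c ≠ 0) (hP : P.map F = P.map (c • LinearMap.id))
    (hv : LinearIndependent K (j ∘ P.subtype ∘ Free.chooseBasis R P)) {d w : R}
    (hd : d ∈ IsLocalRing.maximalIdeal R) (hw : w = c * d) :
    G.eigenspace (ι w) ⊓ span K (j '' P) = ⊥ := by
  obtain ⟨g, hg, hFg⟩ := exists_isUnit_det_of_map_eq_map_smul hc hP
  rw [hw]
  exact eigenspace_inf_span_image_eq_bot hjG hι _ hv hFg
    (det_smul_sub_mul_smul_one_ne_zero (by rwa [LinearMap.det_toMatrix]) hc hd)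

end LinearMap

open TensorProduct in
theorem stmt_5_general (p a : ℕ) [Fact p.Prime] (ha : 1 ≤ a)
    (M : Type*) [AddCommGroup M] [Module.Free ℤ M] [Module.Finite ℤ M]
    (ι : ℤ_[p] →+* ℂ)
    (FZ : M →ₗ[ℤ] M)
    (Fp : ℤ_[p] ⊗[ℤ] M →ₗ[ℤ_[p]] ℤ_[p] ⊗[ℤ] M)
    (hFp : ∀ m : M, Fp ((1 : ℤ_[p]) ⊗ₜ[ℤ] m) = (1 : ℤ_[p]) ⊗ₜ[ℤ] FZ m)
    (FC : ℂ ⊗[ℤ] M →ₗ[ℂ] ℂ ⊗[ℤ] M)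
    (hFC : ∀ m : M, FC ((1 : ℂ) ⊗ₜ[ℤ] m) = (1 : ℂ) ⊗ₜ[ℤ] FZ m)
    (j : ℤ_[p] ⊗[ℤ] M →ₗ[ℤ] ℂ ⊗[ℤ] M)
    (hj : ∀ (c : ℤ_[p]) (m : M), j (c ⊗ₜ[ℤ] m) = (ι c) ⊗ₜ[ℤ] m)
    (conj : ℂ ⊗[ℤ] M →ₗ[ℤ] ℂ ⊗[ℤ] M)
    (hconj : ∀ (c : ℂ) (m : M), conj (c ⊗ₜ[ℤ] m) = (starRingEnd ℂ c) ⊗ₜ[ℤ] m)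
    (M0 M1 M2 : Submodule ℤ_[p] (ℤ_[p] ⊗[ℤ] M))
    [Module.Free ℤ_[p] ↥M0] [Module.Free ℤ_[p] ↥M1] [Module.Free ℤ_[p] ↥M2]
    (hr0 : Module.finrank ℤ_[p] ↥M0 = 1)
    (hsup : M0 ⊔ M1 ⊔ M2 = ⊤)
    (hind0 : M0 ⊓ (M1 ⊔ M2) = ⊥) (hind1 : M1 ⊓ (M0 ⊔ M2) = ⊥)
    (hF0 : Submodule.map Fp M0 = Submodule.map
      (((p : ℤ_[p]) ^ (a * 0)) • (LinearMap.id : ℤ_[p] ⊗[ℤ] M →ₗ[ℤ_[p]] ℤ_[p] ⊗[ℤ] M)) M0)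
    (hF1 : Submodule.map Fp M1 = Submodule.map
      (((p : ℤ_[p]) ^ (a * 1)) • (LinearMap.id : ℤ_[p] ⊗[ℤ] M →ₗ[ℤ_[p]] ℤ_[p] ⊗[ℤ] M)) M1)
    (hF2 : Submodule.map Fp M2 = Submodule.map
      (((p : ℤ_[p]) ^ (a * 2)) • (LinearMap.id : ℤ_[p] ⊗[ℤ] M →ₗ[ℤ_[p]] ℤ_[p] ⊗[ℤ] M)) M2)
    (habs : ∀ u : ℂ, Module.End.HasEigenvalue FC u → ‖u‖ = (p : ℝ) ^ a) :
    Submodule.span ℂ (⇑j '' (M0 : Set (ℤ_[p] ⊗[ℤ] M))) =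
      (⨆ (w : ℤ_[p]) (_ : IsUnit w), Module.End.eigenspace FC (ι w)) ∧
    ∀ x ∈ Submodule.span ℂ (⇑j '' (M0 : Set (ℤ_[p] ⊗[ℤ] M))),
      conj x ∈ Submodule.span ℂ (⇑j '' (M2 : Set (ℤ_[p] ⊗[ℤ] M))) := by
  classical
  let jσ := semilinearMapOfMapTmul j.toAddMonoidHom hj
  let conjσ := semilinearMapOfMapTmul conj.toAddMonoidHom hconj
  have hjF := map_comm_of_map_tmul (f := jσ) hj hFp hFC
  have hconjF := map_comm_of_map_tmul (f := conjσ) hconj hFC hFC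
  have hjtop := span_range_eq_top_of_map_tmul (f := jσ) hj
  have hrank : finrank ℂ (ℂ ⊗[ℤ] M) = finrank ℤ_[p] (ℤ_[p] ⊗[ℤ] M) := by
    rw [finrank_baseChange, finrank_baseChange]
  have hq (s : ℕ) : (p : ℤ_[p]) ^ (a * s) ≠ 0 :=
    pow_ne_zero _ (Nat.cast_ne_zero.mpr (NeZero.ne p))
  have hqm {s : ℕ} (hs : 0 < s) : (p : ℤ_[p]) ^ (a * s) ∈ IsLocalRing.maximalIdeal ℤ_[p] :=
    Ideal.pow_mem_of_mem _ ((IsLocalRing.mem_maximalIdeal _).mpr PadicInt.p_nonunit) _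
      (by positivity)
  obtain ⟨hv0, hv1, hv2, hd0, hd12⟩ :=
    linearIndependent_and_disjoint_span_image₃ jσ hjtop hrank (by rwa [← sup_assoc])
      (disjoint_iff.mpr hind0) ((disjoint_iff.mpr hind1).mono_right le_sup_right)
  have hinv {P : Submodule ℤ_[p] (ℤ_[p] ⊗[ℤ] M)} {c : ℤ_[p]}
      (h : P.map Fp = P.map (c • LinearMap.id)) :=
    span_image_le_comap hjF (le_comap_of_map_eq_map_smul h)
  have hsplit := End.eigenspace_le_sup_inf₃ (hinv hF0) (hinv hF1) (hinv hF2) hd0 hd12 (by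
    rw [← span_image_sup, ← span_image_sup, ← sup_assoc, hsup, top_coe, Set.image_univ, hjtop])
  have hι := PadicInt.ringHom_injective ι
  obtain ⟨u, hu⟩ := exists_le_eigenspace_of_finrank_eq_one hr0 (by simp) hF0
  have hN0 : span ℂ (jσ '' M0) ≤ End.eigenspace FC (ι u) := span_image_le_eigenspace hjF hu
  refine ⟨le_antisymm (hN0.trans (le_iSup₂_of_le (u : ℤ_[p]) u.isUnit le_rfl))
    (iSup₂_le fun w hw => (hsplit _).trans ?_), fun x hx => ?_⟩
  · rw [eigenspace_inf_span_image_eq_bot_of_isUnit hjF hι (hq 1) (hqm one_pos) hF1 hv1 hw,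
      eigenspace_inf_span_image_eq_bot_of_isUnit hjF hι (hq 2) (hqm two_pos) hF2 hv2 hw,
      sup_bot_eq, sup_bot_eq]
    exact inf_le_right
  · have : Nontrivial M0 := Module.nontrivial_of_finrank_eq_succ hr0
    have hconj_u : starRingEnd ℂ (ι u) = ι ((p : ℤ_[p]) ^ (a * 2) * ↑u⁻¹) :=
      Complex.conj_map_eq_of_mul_eq ι u <| by
        simp only [mul_assoc, Units.inv_mul, mul_one, map_pow, map_natCast,
          habs _ (hasEigenvalue_of_le_eigenspace hjF hu hv0), Complex.ofReal_pow,
          Complex.ofReal_natCast]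
        ring
    have hx' := hsplit _ (hconj_u ▸ map_mem_eigenspace hconjF (hN0 hx))
    rw [eigenspace_inf_span_image_eq_bot_of_mem_maximalIdeal hjF hι (hq 0) hF0 hv0
        (Ideal.mul_mem_right (↑u⁻¹) _ (hqm two_pos)) (by ring),
      eigenspace_inf_span_image_eq_bot_of_mem_maximalIdeal hjF hι (hq 1) hF1 hv1
        (Ideal.mul_mem_right (↑u⁻¹) _ (hqm one_pos)) (by ring),
      bot_sup_eq, bot_sup_eq] at hx'
    exact (mem_inf.mp hx').2

open TensorProduct in
/-- cf. Lemma 3.3 and (M4). Let `M` be a finitely generated free `ℤ`-module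
with an endomorphism `FZ` (inducing `Fp` on `M ⊗ ℤ_[p]` and, via a fixed embedding
`ι : ℤ_[p] → ℂ`, `FC` on `M ⊗ ℂ`), such that `M ⊗ ℤ_[p] = M⁰ ⊕ M¹ ⊕ M²` with
`Fp(M^s) = q^s · M^s` for `s = 0, 1, 2`, where `q = p^a`, `a ≥ 1`, each `M^s` free over
`ℤ_[p]` (and `M⁰` of rank 1, as in (M4)).  Suppose `FC` is semisimple with all eigenvalues of
complex absolute value `q`.  Then `M⁰ ⊗ ℂ` is the sum of the eigenspaces of `FC` for
eigenvalues that are (images of) `p`-adic units, and complex conjugation on `M ⊗ ℂ` maps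
`M⁰ ⊗ ℂ` into `M² ⊗ ℂ`. -/
theorem stmt_5 (p a : ℕ) [Fact p.Prime] (ha : 1 ≤ a)
    (M : Type*) [AddCommGroup M] [Module.Free ℤ M] [Module.Finite ℤ M]
    (ι : ℤ_[p] →+* ℂ)
    (FZ : M →ₗ[ℤ] M)
    (Fp : ℤ_[p] ⊗[ℤ] M →ₗ[ℤ_[p]] ℤ_[p] ⊗[ℤ] M)
    (hFp : ∀ m : M, Fp ((1 : ℤ_[p]) ⊗ₜ[ℤ] m) = (1 : ℤ_[p]) ⊗ₜ[ℤ] FZ m)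
    (FC : ℂ ⊗[ℤ] M →ₗ[ℂ] ℂ ⊗[ℤ] M)
    (hFC : ∀ m : M, FC ((1 : ℂ) ⊗ₜ[ℤ] m) = (1 : ℂ) ⊗ₜ[ℤ] FZ m)
    (j : ℤ_[p] ⊗[ℤ] M →ₗ[ℤ] ℂ ⊗[ℤ] M)
    (hj : ∀ (c : ℤ_[p]) (m : M), j (c ⊗ₜ[ℤ] m) = (ι c) ⊗ₜ[ℤ] m)
    (conj : ℂ ⊗[ℤ] M →ₗ[ℤ] ℂ ⊗[ℤ] M)
    (hconj : ∀ (c : ℂ) (m : M), conj (c ⊗ₜ[ℤ] m) = (starRingEnd ℂ c) ⊗ₜ[ℤ] m)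
    (M0 M1 M2 : Submodule ℤ_[p] (ℤ_[p] ⊗[ℤ] M))
    [Module.Free ℤ_[p] ↥M0] [Module.Free ℤ_[p] ↥M1] [Module.Free ℤ_[p] ↥M2]
    (hr0 : Module.finrank ℤ_[p] ↥M0 = 1)
    (hsup : M0 ⊔ M1 ⊔ M2 = ⊤)
    (hind0 : M0 ⊓ (M1 ⊔ M2) = ⊥) (hind1 : M1 ⊓ (M0 ⊔ M2) = ⊥) (hind2 : M2 ⊓ (M0 ⊔ M1) = ⊥)
    (hF0 : Submodule.map Fp M0 = Submodule.map
      (((p : ℤ_[p]) ^ (a * 0)) • (LinearMap.id : ℤ_[p] ⊗[ℤ] M →ₗ[ℤ_[p]] ℤ_[p] ⊗[ℤ] M)) M0)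
    (hF1 : Submodule.map Fp M1 = Submodule.map
      (((p : ℤ_[p]) ^ (a * 1)) • (LinearMap.id : ℤ_[p] ⊗[ℤ] M →ₗ[ℤ_[p]] ℤ_[p] ⊗[ℤ] M)) M1)
    (hF2 : Submodule.map Fp M2 = Submodule.map
      (((p : ℤ_[p]) ^ (a * 2)) • (LinearMap.id : ℤ_[p] ⊗[ℤ] M →ₗ[ℤ_[p]] ℤ_[p] ⊗[ℤ] M)) M2)
    (hss : Module.End.IsSemisimple FC)
    (habs : ∀ u : ℂ, Module.End.HasEigenvalue FC u → ‖u‖ = (p : ℝ) ^ a) :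
    Submodule.span ℂ (⇑j '' (M0 : Set (ℤ_[p] ⊗[ℤ] M))) =
      (⨆ (w : ℤ_[p]) (_ : IsUnit w), Module.End.eigenspace FC (ι w)) ∧
    ∀ x ∈ Submodule.span ℂ (⇑j '' (M0 : Set (ℤ_[p] ⊗[ℤ] M))),
      conj x ∈ Submodule.span ℂ (⇑j '' (M2 : Set (ℤ_[p] ⊗[ℤ] M))) :=
  stmt_5_general p a ha M ι FZ Fp hFp FC hFC j hj conj hconj M0 M1 M2 hr0 hsup hind0 hind1 hF0 hF1
    hF2 habs
end
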